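/- arXiv:1703.07593 — 3 statements merged into one kernel-verified Lean document; each statement's English description precedes it below -/
import Mathlib

section
/- If y is a multiplicative seminorm on AddMonoidAlgebra K S extending |−|, then the composite y ∘ F is a multiplicative seminorm on AddMonoidAlgebra K S' extending |−|, and the tropicalizations are related equivariantly: (y ∘ F)(single u 1) = y (single (e u) 1) for all u ∈ S'. Moreover, the assignment y ↦ y ∘ F is a bijection from the set of multiplicative seminorms on AddMonoidAlgebra K S extending |−| onto the set of multiplicative seminorms on AddMonoidAlgebra K S' extending |−|. (This is the affine-chart form of the lemma that a twisted Galois action on a toric variety induces an action on Berkovich points for which the tropicalization map is Galois-equivariant.) -/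
/-- A multiplicative seminorm on a commutative `K`-algebra `A` extending the absolute value
`absv` on `K`. -/
def IsMultSeminorm (K : Type*) [Field K] (absv : K → ℝ)
    (A : Type*) [CommRing A] [Algebra K A] (y : A → ℝ) : Prop :=
  (∀ x : A, 0 ≤ y x) ∧ y 0 = 0 ∧ y 1 = 1 ∧
  (∀ x z : A, y (x * z) = y x * y z) ∧
  (∀ x z : A, y (x + z) ≤ y x + y z) ∧
  (∀ c : K, y (algebraMap K A c) = absv c)

lemma comp_isMultSeminorm (K : Type*) [Field K] (absv : K → ℝ)
    (A B : Type*) [CommRing A] [Algebra K A] [CommRing B] [Algebra K B]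
    (φ : B →+* A) (y : A → ℝ) (hy : IsMultSeminorm K absv A y)
    (hφ : ∀ c : K, y (φ (algebraMap K B c)) = absv c) :
    IsMultSeminorm K absv B (y ∘ ⇑φ) := by
  obtain ⟨h0, hz, h1, hm, ha, hc⟩ := hy
  refine ⟨fun x => h0 _, by simp [hz], by simp [h1], fun x z => by simp [hm],
    fun x z => by simpa using ha (φ x) (φ z), hφ⟩

/-- If `y` is a multiplicative seminorm on `AddMonoidAlgebra K S` extending
`|−|`, then `y ∘ F` is a multiplicative seminorm on `AddMonoidAlgebra K S'` extending `|−|`,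
tropicalizations are related equivariantly, and `y ↦ y ∘ F` is a bijection between the sets
of multiplicative seminorms extending `|−|`. -/
theorem stmt_3 (K₀ K : Type*) [Field K₀] [Field K] [Algebra K₀ K]
    (absv : K → ℝ)
    (habs_nonneg : ∀ a : K, 0 ≤ absv a)
    (habs_eq_zero : ∀ a : K, absv a = 0 ↔ a = 0)
    (habs_mul : ∀ a b : K, absv (a * b) = absv a * absv b)
    (habs_ultra : ∀ a b : K, absv (a + b) ≤ max (absv a) (absv b))
    (g : K ≃ₐ[K₀] K) (hg : ∀ a : K, absv (g a) = absv a)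
    (S S' : Type*) [AddCommMonoid S] [AddCommMonoid S'] (e : S' ≃+ S)
    (F : AddMonoidAlgebra K S' ≃ₐ[K₀] AddMonoidAlgebra K S)
    (hF : ∀ (u : S') (a : K),
      F (AddMonoidAlgebra.single u a) = AddMonoidAlgebra.single (e u) (g a)) :
    (∀ y : AddMonoidAlgebra K S → ℝ,
      IsMultSeminorm K absv (AddMonoidAlgebra K S) y →
        IsMultSeminorm K absv (AddMonoidAlgebra K S') (y ∘ ⇑F) ∧
        ∀ u : S', (y ∘ ⇑F) (AddMonoidAlgebra.single u 1)
          = y (AddMonoidAlgebra.single (e u) 1)) ∧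
    Set.BijOn (fun y : AddMonoidAlgebra K S → ℝ => y ∘ ⇑F)
      {y | IsMultSeminorm K absv (AddMonoidAlgebra K S) y}
      {y | IsMultSeminorm K absv (AddMonoidAlgebra K S') y} := by
  have halg : ∀ c : K, (algebraMap K (AddMonoidAlgebra K S') c)
      = AddMonoidAlgebra.single 0 c := by
    intro c
    rw [AddMonoidAlgebra.coe_algebraMap]
    simp
  have halg' : ∀ c : K, (algebraMap K (AddMonoidAlgebra K S) c)
      = AddMonoidAlgebra.single 0 c := by
    intro c
    rw [AddMonoidAlgebra.coe_algebraMap]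
    simp
  have hFsymm : ∀ (u : S) (a : K),
      F.symm (AddMonoidAlgebra.single u a)
        = AddMonoidAlgebra.single (e.symm u) (g.symm a) := by
    intro u a
    apply F.injective
    rw [F.apply_symm_apply, hF]
    simp
  have key : ∀ y : AddMonoidAlgebra K S → ℝ,
      IsMultSeminorm K absv (AddMonoidAlgebra K S) y →
        IsMultSeminorm K absv (AddMonoidAlgebra K S') (y ∘ ⇑F) := by
    intro y hy
    refine comp_isMultSeminorm K absv _ _ F.toRingEquiv.toRingHom y hy ?_
    intro c
    have : (F (algebraMap K (AddMonoidAlgebra K S') c))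
        = algebraMap K (AddMonoidAlgebra K S) (g c) := by
      rw [halg, hF, halg', map_zero]
    show y (F (algebraMap K (AddMonoidAlgebra K S') c)) = absv c
    rw [this]
    exact (hy.2.2.2.2.2 (g c)).trans (hg c)
  refine ⟨fun y hy => ⟨key y hy, fun u => by simp [hF, map_one]⟩, ?_, ?_, ?_⟩
  · intro y hy
    exact key y hy
  · intro y₁ _ y₂ _ h
    funext x
    have := congrFun h (F.symm x)
    simpa [F.apply_symm_apply] using this
  · intro y' hy'
    refine ⟨y' ∘ ⇑F.symm, ?_, ?_⟩
    · refine comp_isMultSeminorm K absv _ _ F.symm.toRingEquiv.toRingHom y' hy' ?_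
      intro c
      have : (F.symm (algebraMap K (AddMonoidAlgebra K S) c))
          = algebraMap K (AddMonoidAlgebra K S') (g.symm c) := by
        rw [halg', hFsymm, halg, map_zero]
      have h2 := (hy'.2.2.2.2.2 (g.symm c))
      have h3 : absv (g.symm c) = absv c := by
        conv_rhs => rw [← g.apply_symm_apply c]
        rw [hg]
      show y' (F.symm (algebraMap K (AddMonoidAlgebra K S) c)) = absv c
      rw [this]
      exact h2.trans h3
    · funext x
      simp [F.symm_apply_apply]
end

section
/- Let 𝔞 be an ideal of AddMonoidAlgebra K S and set 𝔞' := F⁻¹(𝔞), an ideal of AddMonoidAlgebra K S'. Define Trop(𝔞) := { (u ↦ y (single u 1)) : y is a multiplicative seminorm on AddMonoidAlgebra K S extending |−| with y(f) = 0 for all f ∈ 𝔞 } ⊆ (S → ℝ), and Trop(𝔞') ⊆ (S' → ℝ) similarly. Then Trop(𝔞') = { w ∘ e : w ∈ Trop(𝔞) }. (This is the affine-chart form of the lemma that the tropicalization of a Galois-invariant closed subvariety is invariant under the induced Galois action and the tropicalization map is Galois-equivariant.) -/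
/-- With `𝔞' = F⁻¹(𝔞)`, the tropicalization of `𝔞'` equals the set of
compositions `w ∘ e` of elements `w` of the tropicalization of `𝔞`. -/
theorem stmt_4 (K₀ K : Type*) [Field K₀] [Field K] [Algebra K₀ K]
    (absv : K → ℝ)
    (habs_nonneg : ∀ a : K, 0 ≤ absv a)
    (habs_eq_zero : ∀ a : K, absv a = 0 ↔ a = 0)
    (habs_mul : ∀ a b : K, absv (a * b) = absv a * absv b)
    (habs_ultra : ∀ a b : K, absv (a + b) ≤ max (absv a) (absv b))
    (g : K ≃ₐ[K₀] K) (hg : ∀ a : K, absv (g a) = absv a)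
    (S S' : Type*) [AddCommMonoid S] [AddCommMonoid S'] (e : S' ≃+ S)
    (F : AddMonoidAlgebra K S' ≃ₐ[K₀] AddMonoidAlgebra K S)
    (hF : ∀ (u : S') (a : K),
      F (AddMonoidAlgebra.single u a) = AddMonoidAlgebra.single (e u) (g a))
    (𝔞 : Ideal (AddMonoidAlgebra K S)) (𝔞' : Ideal (AddMonoidAlgebra K S'))
    (h𝔞' : ∀ x : AddMonoidAlgebra K S', x ∈ 𝔞' ↔ F x ∈ 𝔞) :
    {w' : S' → ℝ | ∃ y : AddMonoidAlgebra K S' → ℝ,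
        IsMultSeminorm K absv (AddMonoidAlgebra K S') y ∧
        (∀ f ∈ 𝔞', y f = 0) ∧
        w' = fun u : S' => y (AddMonoidAlgebra.single u 1)}
      =
    {w' : S' → ℝ | ∃ w ∈ {w : S → ℝ | ∃ y : AddMonoidAlgebra K S → ℝ,
        IsMultSeminorm K absv (AddMonoidAlgebra K S) y ∧
        (∀ f ∈ 𝔞, y f = 0) ∧
        w = fun u : S => y (AddMonoidAlgebra.single u 1)},
      w' = w ∘ ⇑e} := by
  have halg : ∀ c : K, algebraMap K (AddMonoidAlgebra K S) c = AddMonoidAlgebra.single 0 c := by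
    intro c
    simp [AddMonoidAlgebra.coe_algebraMap]
  have halg' : ∀ c : K, algebraMap K (AddMonoidAlgebra K S') c = AddMonoidAlgebra.single 0 c := by
    intro c
    simp [AddMonoidAlgebra.coe_algebraMap]
  have hFsymm : ∀ (v : S) (c : K),
      F.symm (AddMonoidAlgebra.single v c) = AddMonoidAlgebra.single (e.symm v) (g.symm c) := by
    intro v c
    rw [AlgEquiv.symm_apply_eq, hF]
    simp
  ext w'
  constructor
  · rintro ⟨y', ⟨hnn, h0, h1, hmul, hadd, hc⟩, hvan, rfl⟩
    refine ⟨fun v => y' (F.symm (AddMonoidAlgebra.single v 1)),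
      ⟨fun x => y' (F.symm x), ⟨fun x => hnn _, by simpa using h0, by simpa using h1,
        fun x z => by simpa using hmul _ _, fun x z => by simpa using hadd _ _, ?_⟩, ?_, rfl⟩, ?_⟩
    · intro c
      show y' (F.symm (algebraMap K (AddMonoidAlgebra K S) c)) = absv c
      rw [halg, hFsymm, map_zero, ← halg', hc, ← hg (g.symm c)]
      simp
    · intro f hf
      apply hvan
      rw [h𝔞']
      simpa using hf
    · funext u
      show y' (AddMonoidAlgebra.single u 1) = y' (F.symm (AddMonoidAlgebra.single (e u) 1))
      rw [hFsymm]
      simp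
  · rintro ⟨w, ⟨y, ⟨hnn, h0, h1, hmul, hadd, hc⟩, hvan, rfl⟩, rfl⟩
    refine ⟨fun x => y (F x), ⟨fun x => hnn _, by simpa using h0, by simpa using h1,
      fun x z => by simpa using hmul _ _, fun x z => by simpa using hadd _ _, ?_⟩, ?_, ?_⟩
    · intro c
      show y (F (algebraMap K (AddMonoidAlgebra K S') c)) = absv c
      rw [halg', hF, ← hg c, map_zero, ← halg]
      exact hc (g c)
    · intro f hf
      exact hvan _ ((h𝔞' f).mp hf)
    · funext u
      simp [hF, map_one]
end

section
/- Assume g preserves |−|. Then for every additive monoid homomorphism v : S →+ ℝ, the twisted isomorphism F maps the tilted ring K[S']^{v∘e} := { x ∈ AddMonoidAlgebra K S' : |x u| ≤ exp(v (e u)) for all u ∈ S' } bijectively onto the tilted ring K[S]^v := { x ∈ AddMonoidAlgebra K S : |x s| ≤ exp(v s) for all s ∈ S }, i.e. F '' K[S']^{v∘e} = K[S]^v. Moreover, for any ideal 𝔞 of AddMonoidAlgebra K S with 𝔞' := F⁻¹(𝔞), one has F '' (𝔞' ∩ K[S']^{v∘e}) = 𝔞 ∩ K[S]^v. (This is the key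 step in the proof that the Gröbner complex of a Galois-equivariant embedding is invariant under the Galois action.) -/
/-!
`F` acts on coefficients by `(F x) s = g (x (e⁻¹ s))`, and `g` preserves `|−|`, so the preimage
of `K[S]^v` under `F` is exactly `K[S']^{v∘e}`; since `F` is surjective, taking images of
preimages gives both equalities, as `𝔞' = F⁻¹(𝔞)` and preimages commute with `∩`.
-/

namespace AddMonoidAlgebra

variable {R R' M M' Φ Ψ : Type*} [Semiring R] [Semiring R']

theorem coeff_apply_of_map_single [FunLike Φ (AddMonoidAlgebra R M') (AddMonoidAlgebra R' M)]
    [AddMonoidHomClass Φ (AddMonoidAlgebra R M') (AddMonoidAlgebra R' M)]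
    [FunLike Ψ R R'] [AddMonoidHomClass Ψ R R'] {F : Φ} {g : Ψ} {e : M' ≃ M}
    (hF : ∀ u a, F (single u a) = single (e u) (g a)) (x : AddMonoidAlgebra R M') (s : M) :
    (F x).coeff s = g (x.coeff (e.symm s)) := by
  induction x using induction_linear with
  | zero => simp
  | add x y hx hy => simp only [map_add, coeff_add, Finsupp.add_apply, hx, hy]
  | single u a =>
    classical
    rw [hF, coeff_single, coeff_single, Finsupp.single_apply, Finsupp.single_apply,
      e.eq_symm_apply]
    split_ifs <;> simp

/-- The paper's tilted ring `K[T]^w` (a subring when `absv` is a nonarchimedean absolute value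
and `w` is additive). -/
def tiltedRing {K T : Type*} [Semiring K] (absv : K → ℝ) (w : T → ℝ) :
    Set (AddMonoidAlgebra K T) :=
  {x | ∀ t, absv (x.coeff t) ≤ Real.exp (w t)}

theorem preimage_tiltedRing_of_map_single
    [FunLike Φ (AddMonoidAlgebra R M') (AddMonoidAlgebra R M)]
    [AddMonoidHomClass Φ (AddMonoidAlgebra R M') (AddMonoidAlgebra R M)]
    [FunLike Ψ R R] [AddMonoidHomClass Ψ R R] {F : Φ} {g : Ψ} {e : M' ≃ M}
    (hF : ∀ u a, F (single u a) = single (e u) (g a)) {absv : R → ℝ}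
    (hg : ∀ a, absv (g a) = absv a) (w : M → ℝ) :
    F ⁻¹' tiltedRing absv w = tiltedRing absv (w ∘ e) := by
  ext x
  simp only [tiltedRing, Set.mem_preimage, Set.mem_ofPred_eq, coeff_apply_of_map_single hF, hg,
    Function.comp_apply]
  exact e.symm.forall_congr_left.trans (by simp)

end AddMonoidAlgebra

open AddMonoidAlgebra in
theorem stmt_6_general (K₀ K : Type*) [Field K₀] [Field K] [Algebra K₀ K]
    (absv : K → ℝ)
    (g : K ≃ₐ[K₀] K) (hg : ∀ a : K, absv (g a) = absv a)
    (S S' : Type*) [AddCommMonoid S] [AddCommMonoid S'] (e : S' ≃+ S)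
    (F : AddMonoidAlgebra K S' ≃ₐ[K₀] AddMonoidAlgebra K S)
    (hF : ∀ (u : S') (a : K),
      F (AddMonoidAlgebra.single u a) = AddMonoidAlgebra.single (e u) (g a))
    (v : S →+ ℝ) :
    (⇑F '' {x : AddMonoidAlgebra K S' | ∀ u : S', absv (x.coeff u) ≤ Real.exp (v (e u))}
      = {x : AddMonoidAlgebra K S | ∀ s : S, absv (x.coeff s) ≤ Real.exp (v s)}) ∧
    (∀ (𝔞 : Ideal (AddMonoidAlgebra K S)) (𝔞' : Ideal (AddMonoidAlgebra K S')),
      (∀ x : AddMonoidAlgebra K S', x ∈ 𝔞' ↔ F x ∈ 𝔞) →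
      ⇑F '' ((𝔞' : Set (AddMonoidAlgebra K S')) ∩
          {x : AddMonoidAlgebra K S' | ∀ u : S', absv (x.coeff u) ≤ Real.exp (v (e u))})
        = (𝔞 : Set (AddMonoidAlgebra K S)) ∩
          {x : AddMonoidAlgebra K S | ∀ s : S, absv (x.coeff s) ≤ Real.exp (v s)}) := by
  have hpre : F ⁻¹' tiltedRing absv v = tiltedRing absv (v ∘ e.toEquiv) :=
    preimage_tiltedRing_of_map_single (e := e.toEquiv) hF hg v
  refine ⟨?_, fun 𝔞 𝔞' h𝔞 => ?_⟩
  · change F '' tiltedRing absv (v ∘ e.toEquiv) = tiltedRing absv v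
    rw [← hpre, Set.image_preimage_eq _ F.surjective]
  · change F '' ((𝔞' : Set _) ∩ tiltedRing absv (v ∘ e.toEquiv)) =
      (𝔞 : Set _) ∩ tiltedRing absv v
    rw [show (𝔞' : Set _) = F ⁻¹' 𝔞 from Set.ext h𝔞, ← hpre, ← Set.preimage_inter,
      Set.image_preimage_eq _ F.surjective]

/-- Assuming `g` preserves `|−|`, the twisted isomorphism `F` maps the tilted
ring `K[S']^{v∘e}` bijectively onto the tilted ring `K[S]^v`, and for any ideal `𝔞` with
`𝔞' = F⁻¹(𝔞)` it maps `𝔞' ∩ K[S']^{v∘e}` onto `𝔞 ∩ K[S]^v`. -/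
theorem stmt_6 (K₀ K : Type*) [Field K₀] [Field K] [Algebra K₀ K]
    (absv : K → ℝ)
    (habs_nonneg : ∀ a : K, 0 ≤ absv a)
    (habs_eq_zero : ∀ a : K, absv a = 0 ↔ a = 0)
    (habs_mul : ∀ a b : K, absv (a * b) = absv a * absv b)
    (habs_ultra : ∀ a b : K, absv (a + b) ≤ max (absv a) (absv b))
    (g : K ≃ₐ[K₀] K) (hg : ∀ a : K, absv (g a) = absv a)
    (S S' : Type*) [AddCommMonoid S] [AddCommMonoid S'] (e : S' ≃+ S)
    (F : AddMonoidAlgebra K S' ≃ₐ[K₀] AddMonoidAlgebra K S)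
    (hF : ∀ (u : S') (a : K),
      F (AddMonoidAlgebra.single u a) = AddMonoidAlgebra.single (e u) (g a))
    (v : S →+ ℝ) :
    (⇑F '' {x : AddMonoidAlgebra K S' | ∀ u : S', absv (x.coeff u) ≤ Real.exp (v (e u))}
      = {x : AddMonoidAlgebra K S | ∀ s : S, absv (x.coeff s) ≤ Real.exp (v s)}) ∧
    (∀ (𝔞 : Ideal (AddMonoidAlgebra K S)) (𝔞' : Ideal (AddMonoidAlgebra K S')),
      (∀ x : AddMonoidAlgebra K S', x ∈ 𝔞' ↔ F x ∈ 𝔞) →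
      ⇑F '' ((𝔞' : Set (AddMonoidAlgebra K S')) ∩
          {x : AddMonoidAlgebra K S' | ∀ u : S', absv (x.coeff u) ≤ Real.exp (v (e u))})
        = (𝔞 : Set (AddMonoidAlgebra K S)) ∩
          {x : AddMonoidAlgebra K S | ∀ s : S, absv (x.coeff s) ≤ Real.exp (v s)}) :=
  stmt_6_general K₀ K absv g hg S S' e F hF v
end
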